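/- Under the hypotheses of the stochastic equation θ =_d BY + (1-B)θ with B, Y, θ independent, B ∈ (0,1), and E|Y|^3 < ∞, E|θ|^3 < ∞: E[(θ-θ₀)^3] = (E[B^3]/(1 - E[(1-B)^3])) · E[(Y-θ₀)^3], where θ₀ = E[Y] = E[θ]. -/

import Mathlib

/-!
Taking expectations in the fixed-point equation gives `E θ = E B · E Y + (1 - E B) · E θ`, and
`E B > 0` forces `E θ = E Y = θ₀`. Centering at `θ₀` and expanding
`(B (Y - θ₀) + (1 - B) (θ - θ₀))³`, independence factorises every term; the two mixed terms
carry a first central moment and vanish, so the third central moments satisfy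
`m₃(θ) = E[B³] m₃(Y) + E[(1 - B)³] m₃(θ)`, which can be solved for `m₃(θ)` because
`E[(1 - B)³] < 1`.
-/

open MeasureTheory ProbabilityTheory
open scoped ENNReal

namespace MeasureTheory

variable {Ω : Type*} [MeasurableSpace Ω] {μ : Measure Ω}

lemma integrable_comp_of_ae_mem_compact [IsFiniteMeasure μ] {α : Type*} [TopologicalSpace α]
    [MeasurableSpace α] [OpensMeasurableSpace α] {K : Set α} (hK : IsCompact K)
    {f : α → ℝ} (hf : Continuous f) {X : Ω → α} (hX : AEMeasurable X μ)
    (hXK : ∀ᵐ ω ∂μ, X ω ∈ K) : Integrable (fun ω => f (X ω)) μ := by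
  obtain ⟨C, hC⟩ := hK.exists_bound_of_continuousOn hf.continuousOn
  exact .of_bound (hf.measurable.comp_aemeasurable hX).aestronglyMeasurable C
    (hXK.mono fun ω hω => hC _ hω)

lemma integral_pos_of_ae_pos [NeZero μ] {f : Ω → ℝ} (hf : Integrable f μ)
    (hpos : ∀ᵐ ω ∂μ, 0 < f ω) : 0 < ∫ ω, f ω ∂μ := by
  have hsupp : Function.support f =ᵐ[μ] (Set.univ : Set Ω) :=
    ae_eq_univ.2 (hpos.mono fun _ h => h.ne')
  rw [integral_pos_iff_support_of_nonneg_ae (hpos.mono fun _ h => h.le) hf,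
    measure_congr hsupp, Measure.measure_univ_pos]
  exact NeZero.ne μ

lemma memLp_of_integrable_abs_pow {X : Ω → ℝ} (hX : AEStronglyMeasurable X μ) {n : ℕ}
    (hn : n ≠ 0) (h : Integrable (fun ω => |X ω| ^ n) μ) : MemLp X n μ := by
  rw [← integrable_norm_rpow_iff hX (by exact_mod_cast hn) (by simp)]
  simpa [Real.norm_eq_abs] using h

lemma MemLp.integrable_pow [IsFiniteMeasure μ] {X : Ω → ℝ} {p : ℝ≥0∞} (hX : MemLp X p μ)
    {k : ℕ} (hk : (k : ℝ≥0∞) ≤ p) : Integrable (fun ω => X ω ^ k) μ := by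
  refine (integrable_norm_iff (hX.aestronglyMeasurable.pow k)).1 ?_
  simpa [norm_pow] using (hX.mono_exponent hk).integrable_norm_pow'

end MeasureTheory

namespace ProbabilityTheory

variable {Ω : Type*} [MeasurableSpace Ω] {μ : Measure Ω}

lemma iIndepFun.comp_three {α β : Type*} [MeasurableSpace α] [MeasurableSpace β]
    {X Y Z : Ω → α} (h : iIndepFun ![X, Y, Z] μ) {f g k : α → β}
    (hf : Measurable f) (hg : Measurable g) (hk : Measurable k) :
    iIndepFun ![f ∘ X, g ∘ Y, k ∘ Z] μ := by
  convert h.comp ![f, g, k] (fun i => by fin_cases i <;> assumption) using 1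
  ext i : 1
  fin_cases i <;> rfl

section ThreeFactors

variable {X Y Z : Ω → ℝ}

lemma iIndepFun.integral_mul_mul (h : iIndepFun ![X, Y, Z] μ) (hX : AEMeasurable X μ)
    (hY : AEMeasurable Y μ) (hZ : AEMeasurable Z μ) :
    ∫ ω, X ω * Y ω * Z ω ∂μ = (∫ ω, X ω ∂μ) * (∫ ω, Y ω ∂μ) * ∫ ω, Z ω ∂μ := by
  have := h.integral_fun_prod_eq_prod_integral fun i => by
    fin_cases i
    exacts [hX.aestronglyMeasurable, hY.aestronglyMeasurable, hZ.aestronglyMeasurable]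
  simpa [Fin.prod_univ_three, mul_assoc] using this

lemma iIndepFun.integrable_mul_mul (h : iIndepFun ![X, Y, Z] μ) (hX : Integrable X μ)
    (hY : Integrable Y μ) (hZ : Integrable Z μ) :
    Integrable (fun ω => X ω * Y ω * Z ω) μ := by
  have hmeas : ∀ i, AEMeasurable (![X, Y, Z] i) μ := fun i => by
    fin_cases i
    exacts [hX.aemeasurable, hY.aemeasurable, hZ.aemeasurable]
  have hXY : Integrable (X * Y) μ :=
    (h.indepFun (i := 0) (j := 1) (by decide)).integrable_mul hX hY
  exact (h.indepFun_mul_left₀ hmeas 0 1 2 (by decide) (by decide)).integrable_mul hXY hZ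

end ThreeFactors

section Mixture

variable {B U V : Ω → ℝ}

lemma integral_one_sub_pow_lt_one [IsProbabilityMeasure μ] (hB : AEMeasurable B μ)
    (hB01 : ∀ᵐ ω ∂μ, B ω ∈ Set.Ioo 0 1) {n : ℕ} (hn : n ≠ 0) :
    ∫ ω, (1 - B ω) ^ n ∂μ < 1 := by
  have hint : Integrable (fun ω => (1 - B ω) ^ n) μ :=
    integrable_comp_of_ae_mem_compact (f := fun b => (1 - b) ^ n) isCompact_Icc (by fun_prop)
      hB (hB01.mono fun _ h => Set.Ioo_subset_Icc_self h)
  have hpos : 0 < ∫ ω, (1 - (1 - B ω) ^ n) ∂μ :=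
    integral_pos_of_ae_pos ((integrable_const 1).sub hint) (hB01.mono fun ω h =>
      sub_pos.2 (pow_lt_one₀ (sub_nonneg.2 h.2.le) (sub_lt_self 1 h.1) hn))
  rw [integral_sub (integrable_const 1) hint] at hpos
  simpa using hpos

lemma integral_mixture (h : iIndepFun ![B, U, V] μ) (hB : Integrable B μ) (hU : Integrable U μ)
    (hV : Integrable V μ) :
    ∫ ω, (B ω * U ω + (1 - B ω) * V ω) ∂μ =
      (∫ ω, B ω ∂μ) * (∫ ω, U ω ∂μ) + (1 - ∫ ω, B ω ∂μ) * ∫ ω, V ω ∂μ := by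
  have := h.isProbabilityMeasure
  have hBU : IndepFun B U μ := h.indepFun (i := 0) (j := 1) (by decide)
  have hBV : IndepFun (fun ω => 1 - B ω) V μ :=
    (h.indepFun (i := 0) (j := 2) (by decide)).comp (measurable_const_sub (1 : ℝ)) measurable_id
  have h1B : Integrable (fun ω => 1 - B ω) μ := (integrable_const 1).sub hB
  have hBU_int : Integrable (fun ω => B ω * U ω) μ := hBU.integrable_mul hB hU
  have hBV_int : Integrable (fun ω => (1 - B ω) * V ω) μ := hBV.integrable_mul h1B hV
  rw [integral_add hBU_int hBV_int, hBU.integral_fun_mul_eq_mul_integral hB.1 hU.1,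
    hBV.integral_fun_mul_eq_mul_integral h1B.1 hV.1, integral_sub (integrable_const 1) hB]
  simp

lemma integral_eq_of_identDistrib_mixture (h : iIndepFun ![B, U, V] μ) (hB : Integrable B μ)
    (hB_pos : 0 < ∫ ω, B ω ∂μ) (hU : Integrable U μ) (hV : Integrable V μ)
    (hfix : IdentDistrib V (fun ω => B ω * U ω + (1 - B ω) * V ω) μ μ) :
    ∫ ω, V ω ∂μ = ∫ ω, U ω ∂μ := by
  have hmean := hfix.integral_eq
  rw [integral_mixture h hB hU hV] at hmean
  have hprod : (∫ ω, B ω ∂μ) * (∫ ω, V ω ∂μ - ∫ ω, U ω ∂μ) = 0 := by linarith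
  exact sub_eq_zero.1 ((mul_eq_zero.1 hprod).resolve_left hB_pos.ne')

lemma integral_mixture_pow_three (h : iIndepFun ![B, U, V] μ) (hB : AEMeasurable B μ)
    (hB01 : ∀ᵐ ω ∂μ, B ω ∈ Set.Icc 0 1) (hU : MemLp U 3 μ) (hV : MemLp V 3 μ)
    (hU0 : ∫ ω, U ω ∂μ = 0) (hV0 : ∫ ω, V ω ∂μ = 0) :
    ∫ ω, (B ω * U ω + (1 - B ω) * V ω) ^ 3 ∂μ =
      (∫ ω, B ω ^ 3 ∂μ) * (∫ ω, U ω ^ 3 ∂μ) + (∫ ω, (1 - B ω) ^ 3 ∂μ) * ∫ ω, V ω ^ 3 ∂μ := by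
  have := h.isProbabilityMeasure
  have term : ∀ {f : ℝ → ℝ}, Continuous f → ∀ {i j : ℕ}, i ≤ 3 → j ≤ 3 →
      Integrable (fun ω => f (B ω) * U ω ^ i * V ω ^ j) μ ∧
      ∫ ω, f (B ω) * U ω ^ i * V ω ^ j ∂μ =
        (∫ ω, f (B ω) ∂μ) * (∫ ω, U ω ^ i ∂μ) * ∫ ω, V ω ^ j ∂μ := by
    intro f hf i j hi hj
    have hind := h.comp_three hf.measurable (measurable_id.pow_const i) (measurable_id.pow_const j)
    have hfB := integrable_comp_of_ae_mem_compact isCompact_Icc hf hB hB01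
    have hUi := hU.integrable_pow (k := i) (by exact_mod_cast hi)
    have hVj := hV.integrable_pow (k := j) (by exact_mod_cast hj)
    exact ⟨hind.integrable_mul_mul hfB hUi hVj,
      hind.integral_mul_mul hfB.aemeasurable hUi.aemeasurable hVj.aemeasurable⟩
  obtain ⟨i₁, e₁⟩ := term (f := fun b => b ^ 3) (by fun_prop) (i := 3) (j := 0) le_rfl
    (by norm_num)
  obtain ⟨i₂, e₂⟩ := term (f := fun b => 3 * b ^ 2 * (1 - b)) (by fun_prop) (i := 2) (j := 1)
    (by norm_num) (by norm_num)
  obtain ⟨i₃, e₃⟩ := term (f := fun b => 3 * b * (1 - b) ^ 2) (by fun_prop) (i := 1) (j := 2)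
    (by norm_num) (by norm_num)
  obtain ⟨i₄, e₄⟩ := term (f := fun b => (1 - b) ^ 3) (by fun_prop) (i := 0) (j := 3)
    (by norm_num) le_rfl
  -- every term has the shape `f B * U ^ i * V ^ j`; the mixed ones contain `∫ U` or `∫ V`
  calc ∫ ω, (B ω * U ω + (1 - B ω) * V ω) ^ 3 ∂μ
      = ∫ ω, (B ω ^ 3 * U ω ^ 3 * V ω ^ 0 + 3 * B ω ^ 2 * (1 - B ω) * U ω ^ 2 * V ω ^ 1
          + 3 * B ω * (1 - B ω) ^ 2 * U ω ^ 1 * V ω ^ 2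
          + (1 - B ω) ^ 3 * U ω ^ 0 * V ω ^ 3) ∂μ := by
        congr with ω; ring
    _ = _ := by
        rw [integral_add, integral_add, integral_add, e₁, e₂, e₃, e₄]
        · simp [hU0, hV0]
        all_goals fun_prop

lemma integral_mixture_sub_pow_three (h : iIndepFun ![B, U, V] μ) (hB : AEMeasurable B μ)
    (hB01 : ∀ᵐ ω ∂μ, B ω ∈ Set.Icc 0 1) (hU : MemLp U 3 μ) (hV : MemLp V 3 μ) {c : ℝ}
    (hUc : ∫ ω, U ω ∂μ = c) (hVc : ∫ ω, V ω ∂μ = c) :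
    ∫ ω, (B ω * U ω + (1 - B ω) * V ω - c) ^ 3 ∂μ =
      (∫ ω, B ω ^ 3 ∂μ) * (∫ ω, (U ω - c) ^ 3 ∂μ)
        + (∫ ω, (1 - B ω) ^ 3 ∂μ) * ∫ ω, (V ω - c) ^ 3 ∂μ := by
  have := h.isProbabilityMeasure
  have hcentered : ∀ {W : Ω → ℝ}, MemLp W 3 μ → ∫ ω, W ω ∂μ = c → ∫ ω, (W ω - c) ∂μ = 0 := by
    intro W hW hWc
    rw [integral_sub (hW.integrable (by norm_num)) (integrable_const c)]
    simp [hWc]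
  have hind : iIndepFun ![B, fun ω => U ω - c, fun ω => V ω - c] μ :=
    h.comp_three measurable_id (measurable_sub_const c) (measurable_sub_const c)
  rw [← integral_mixture_pow_three hind hB hB01 (hU.sub (memLp_const c))
    (hV.sub (memLp_const c)) (hcentered hU hUc) (hcentered hV hVc)]
  congr with ω
  ring

end Mixture

end ProbabilityTheory

theorem stmt_4 {Ω : Type*} [MeasurableSpace Ω] (μ : Measure Ω) [IsProbabilityMeasure μ]
    (B Y θ : Ω → ℝ) (hB : Measurable B) (hY : Measurable Y) (hθ : Measurable θ)
    (hrange : ∀ᵐ ω ∂μ, B ω ∈ Set.Ioo (0:ℝ) 1)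
    (hindep : iIndepFun ![B, Y, θ] μ)
    (hdist : Measure.map θ μ = Measure.map (fun ω => B ω * Y ω + (1 - B ω) * θ ω) μ)
    (hY3 : Integrable (fun ω => |Y ω| ^ 3) μ) (hθ3 : Integrable (fun ω => |θ ω| ^ 3) μ)
    (θ₀ : ℝ) (hθ₀ : θ₀ = ∫ ω, Y ω ∂μ) :
    θ₀ = ∫ ω, θ ω ∂μ ∧
    ∫ ω, (θ ω - θ₀) ^ 3 ∂μ =
      (∫ ω, B ω ^ 3 ∂μ) / (1 - ∫ ω, (1 - B ω) ^ 3 ∂μ) * ∫ ω, (Y ω - θ₀) ^ 3 ∂μ := by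
  have hB01 : ∀ᵐ ω ∂μ, B ω ∈ Set.Icc 0 1 := hrange.mono fun _ h => Set.Ioo_subset_Icc_self h
  have hB_int : Integrable B μ :=
    integrable_comp_of_ae_mem_compact isCompact_Icc continuous_id hB.aemeasurable hB01
  have hYL3 : MemLp Y 3 μ := memLp_of_integrable_abs_pow hY.aestronglyMeasurable three_ne_zero hY3
  have hθL3 : MemLp θ 3 μ := memLp_of_integrable_abs_pow hθ.aestronglyMeasurable three_ne_zero hθ3
  have hfix : IdentDistrib θ (fun ω => B ω * Y ω + (1 - B ω) * θ ω) μ μ :=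
    ⟨hθ.aemeasurable, by fun_prop, hdist⟩
  have hmean : ∫ ω, θ ω ∂μ = θ₀ :=
    hθ₀ ▸ integral_eq_of_identDistrib_mixture hindep hB_int
      (integral_pos_of_ae_pos hB_int (hrange.mono fun _ h => h.1))
      (hYL3.integrable (by norm_num)) (hθL3.integrable (by norm_num)) hfix
  refine ⟨hmean.symm, ?_⟩
  have hrec : ∫ ω, (θ ω - θ₀) ^ 3 ∂μ = (∫ ω, B ω ^ 3 ∂μ) * (∫ ω, (Y ω - θ₀) ^ 3 ∂μ)
      + (∫ ω, (1 - B ω) ^ 3 ∂μ) * ∫ ω, (θ ω - θ₀) ^ 3 ∂μ := by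
    rw [← integral_mixture_sub_pow_three hindep hB.aemeasurable hB01 hYL3 hθL3 hθ₀.symm hmean]
    exact (hfix.comp ((measurable_sub_const θ₀).pow_const 3)).integral_eq
  have hden := integral_one_sub_pow_lt_one hB.aemeasurable hrange three_ne_zero
  rw [div_mul_eq_mul_div, eq_div_iff (sub_ne_zero.2 hden.ne')]
  linarith
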